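/- Let G be a finite nonabelian TC-group with n = nc(G), and for 1 ≤ k let nc_k denote the number of non-commuting sets of noncentral elements of G of size k. Then for all 1 ≤ j ≤ n the integer inequality (-1)^j·C(n,j) + ∑_{k=1}^{j} (-1)^{j-k}·C(n-k, j-k)·nc_k ≥ 0 holds, where C(a,b) denotes the binomial coefficient. -/

import Mathlib

/-
In a TC-group commuting is an equivalence relation on the noncentral elements, and a maximum
set `R` of pairwise non-commuting nontrivial elements (of size `n = nc G ≥ 2`, hence noncentral)
meets every class exactly once. So the non-commuting sets of noncentral elements are the partial
transversals of these classes. Splitting such a set `S` into `S \ R` and `S ∩ R` gives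
`nc_k = ∑ i, C(n - i, k - i) a_i`, where `a_i` counts the non-commuting `i`-sets disjoint
from `R`, and binomial inversion identifies the alternating sum of the statement with `a_j ≥ 0`.
-/

attribute [local instance] Classical.propDecidable

/-- `nc G` is the maximum size of a set of nontrivial pairwise non-commuting
elements of `G`. -/
noncomputable def nc (G : Type*) [Group G] : ℕ :=
  sSup {n : ℕ | ∃ S : Finset G, S.card = n ∧ (∀ x ∈ S, x ≠ 1) ∧
    ∀ x ∈ S, ∀ y ∈ S, x ≠ y → x * y ≠ y * x}

open Finset Subgroup

def IsTCGroup (G : Type*) [Group G] : Prop :=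
  ∀ g h k : G, g ∉ center G → h ∉ center G → k ∉ center G →
    g * h = h * g → h * k = k * h → g * k = k * g

theorem sum_neg_one_pow_mul_choose_mul_choose {n i j : ℕ} (hij : i ≤ j) (hjn : j ≤ n) :
    ∑ k ∈ Ico i (j + 1), (-1 : ℤ) ^ (j - k) * ((n - k).choose (j - k) : ℤ) *
      ((n - i).choose (k - i) : ℤ) = if i = j then 1 else 0 := by
  obtain ⟨d, rfl⟩ := Nat.exists_eq_add_of_le hij
  have hterm : ∀ t ∈ range (d + 1), (-1 : ℤ) ^ (i + d - (i + t)) *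
      ((n - (i + t)).choose (i + d - (i + t)) : ℤ) * ((n - i).choose (i + t - i) : ℤ) =
      ((n - i).choose d : ℤ) * (1 ^ t * (-1) ^ (d - t) * d.choose t) := by
    intro t ht
    have htd : t ≤ d := Nat.lt_succ_iff.mp (mem_range.mp ht)
    have hchoose := Nat.choose_mul (n := n - i) htd
    rw [show i + d - (i + t) = d - t by omega, show n - (i + t) = n - i - t by omega,
      Nat.add_sub_cancel_left, one_pow, one_mul]
    have := congrArg (Nat.cast : ℕ → ℤ) hchoose
    push_cast at this
    linear_combination (-1 : ℤ) ^ (d - t) * this.symm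
  -- the sum is `C(n - i, d) * (1 + (-1)) ^ d`
  rw [sum_Ico_eq_sum_range, show i + d + 1 - i = d + 1 by omega, sum_congr rfl hterm,
    ← mul_sum, ← add_pow, add_neg_cancel, zero_pow_eq]
  rcases Nat.eq_zero_or_pos d with rfl | hd
  · simp
  · simp [hd.ne']

theorem sum_neg_one_pow_mul_choose_mul_sum_choose_mul {n j : ℕ} (hjn : j ≤ n) (f : ℕ → ℤ) :
    ∑ k ∈ range (j + 1), (-1 : ℤ) ^ (j - k) * ((n - k).choose (j - k) : ℤ) *
      ∑ i ∈ range (k + 1), ((n - i).choose (k - i) : ℤ) * f i = f j := by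
  simp_rw [mul_sum, range_eq_Ico]
  rw [← sum_Ico_Ico_comm]
  have hinner : ∀ i ∈ Ico 0 (j + 1), ∑ k ∈ Ico i (j + 1), (-1 : ℤ) ^ (j - k) *
      ((n - k).choose (j - k) : ℤ) * (((n - i).choose (k - i) : ℤ) * f i) =
      if i = j then f i else 0 := by
    intro i hi
    simp_rw [← mul_assoc, ← sum_mul]
    rw [sum_neg_one_pow_mul_choose_mul_choose (by simpa [Nat.lt_succ_iff] using hi) hjn]
    split_ifs <;> simp
  rw [sum_congr rfl hinner, sum_ite_eq']
  simp

theorem neg_one_pow_mul_choose_add_sum_Icc_nonneg {n j : ℕ} (hjn : j ≤ n) {a b : ℕ → ℕ}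
    (hb : ∀ k, b k = ∑ i ∈ range (k + 1), (n - i).choose (k - i) * a i) (hb0 : b 0 = 1) :
    0 ≤ (-1 : ℤ) ^ j * (n.choose j : ℤ) +
      ∑ k ∈ Icc 1 j, (-1 : ℤ) ^ (j - k) * ((n - k).choose (j - k) : ℤ) * (b k : ℤ) := by
  have hbℤ : ∀ k, (b k : ℤ) = ∑ i ∈ range (k + 1), ((n - i).choose (k - i) : ℤ) * (a i : ℤ) :=
    fun k => by rw [hb k]; push_cast; rfl
  have hinv := sum_neg_one_pow_mul_choose_mul_sum_choose_mul hjn (fun i => (a i : ℤ))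
  simp_rw [← hbℤ] at hinv
  suffices (-1 : ℤ) ^ j * (n.choose j : ℤ) +
      ∑ k ∈ Icc 1 j, (-1 : ℤ) ^ (j - k) * ((n - k).choose (j - k) : ℤ) * (b k : ℤ) = a j by
    rw [this]; positivity
  rw [← hinv, Nat.range_succ_eq_Icc_zero, ← insert_Icc_add_one_left_eq_Icc j.zero_le,
    sum_insert (by simp), zero_add, Nat.sub_zero, Nat.sub_zero, hb0, Nat.cast_one, mul_one]

section PartialTransversal

variable {α : Type*} {c : α → α} {N R S' W : Finset α}

-- Without the ascription `(S : Finset α)` in `{S ∈ N.powersetCard k | Set.InjOn c S}`,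
-- `S` would be elaborated as a `Set α`.

theorem injOn_union_iff_disjoint_image (hS' : Set.InjOn c S') (hW : ∀ r ∈ W, c r = r)
    (hdisj : Disjoint S' W) : Set.InjOn c ↑(S' ∪ W) ↔ Disjoint (S'.image c) W := by
  have hWinj : Set.InjOn c W := fun x hx y hy hxy => by
    rwa [hW x hx, hW y hy] at hxy
  rw [coe_union, Set.injOn_union (disjoint_coe.mpr hdisj), disjoint_left]
  simp only [hS', hWinj, true_and, mem_image, forall_exists_index, and_imp]
  constructor
  · rintro h _ x hx rfl hxW
    exact h x hx (c x) hxW (hW _ hxW).symm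
  · intro h x hx y hy hxy
    exact h x hx rfl (hxy ▸ (hW y hy).symm ▸ hy)

theorem card_filter_injOn_sdiff_eq (hRN : R ⊆ N) (hc : ∀ x ∈ N, c x ∈ R)
    (hcR : ∀ r ∈ R, c r = r) {k : ℕ} (hS'N : S' ⊆ N \ R) (hS' : Set.InjOn c S')
    (hk : #S' ≤ k) :
    #{S ∈ N.powersetCard k | Set.InjOn c (S : Finset α) ∧ S \ R = S'} =
      (#R - #S').choose (k - #S') := by
  have hS'R : Disjoint S' R := disjoint_of_subset_left hS'N sdiff_disjoint
  have hcS' : S'.image c ⊆ R := image_subset_iff.mpr fun x hx => hc x (sdiff_subset (hS'N hx))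
  have hcard : #(R \ S'.image c) = #R - #S' := by
    rw [card_sdiff_of_subset hcS', card_image_of_injOn hS']
  rw [← hcard, ← card_powersetCard]
  refine card_nbij' (fun S : Finset α => S ∩ R) (S' ∪ ·) ?_ ?_ ?_ ?_
  · intro S hS
    simp only [mem_coe, mem_filter, mem_powersetCard] at hS
    obtain ⟨⟨-, hSk⟩, hinj, hSS'⟩ := hS
    have hunion : S' ∪ S ∩ R = S := hSS' ▸ sdiff_union_inter S R
    rw [← hunion, injOn_union_iff_disjoint_image hS' (fun r hr => hcR r (mem_inter.mp hr).2)
      (disjoint_of_subset_right inter_subset_right hS'R)] at hinj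
    dsimp only
    refine mem_powersetCard.mpr ⟨subset_sdiff.mpr ⟨inter_subset_right, hinj.symm⟩, ?_⟩
    have := card_sdiff_add_card_inter S R
    rw [hSS'] at this
    omega
  · intro W hW
    simp only [mem_coe, mem_powersetCard, subset_sdiff] at hW
    obtain ⟨⟨hWR, hWc⟩, hWk⟩ := hW
    have hdisj : Disjoint S' W := disjoint_of_subset_right hWR hS'R
    simp only [mem_coe, mem_filter, mem_powersetCard]
    refine ⟨⟨union_subset (hS'N.trans sdiff_subset) (hWR.trans hRN), ?_⟩,
      (injOn_union_iff_disjoint_image hS' (fun r hr => hcR r (hWR hr)) hdisj).mpr hWc.symm, ?_⟩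
    · rw [card_union_of_disjoint hdisj, hWk]
      omega
    · rw [union_sdiff_distrib, sdiff_eq_self_of_disjoint hS'R, sdiff_eq_empty_iff_subset.mpr hWR,
        union_empty]
  · intro S hS
    simp only [mem_coe, mem_filter] at hS
    dsimp only
    rw [← hS.2.2, sdiff_union_inter]
  · intro W hW
    simp only [mem_coe, mem_powersetCard, subset_sdiff] at hW
    simp only [union_inter_distrib_right, disjoint_iff_inter_eq_empty.mp hS'R, empty_union,
      inter_eq_left.mpr hW.1.1]

theorem card_filter_injOn_eq_sum (hRN : R ⊆ N) (hc : ∀ x ∈ N, c x ∈ R)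
    (hcR : ∀ r ∈ R, c r = r) (k : ℕ) :
    #{S ∈ N.powersetCard k | Set.InjOn c (S : Finset α)} = ∑ i ∈ range (k + 1),
      (#R - i).choose (k - i) * #{S ∈ (N \ R).powersetCard i | Set.InjOn c (S : Finset α)} := by
  set T : Finset (Finset α) := {S' ∈ (N \ R).powerset | Set.InjOn c (S' : Finset α) ∧ #S' ≤ k}
  have hT : ∀ S ∈ {S ∈ N.powersetCard k | Set.InjOn c (S : Finset α)}, S \ R ∈ T := by
    intro S hS
    simp only [mem_filter, mem_powersetCard] at hS
    simp only [T, mem_filter, mem_powerset]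
    exact ⟨sdiff_subset_sdiff hS.1.1 le_rfl, hS.2.mono sdiff_subset,
      hS.1.2 ▸ card_le_card sdiff_subset⟩
  rw [card_eq_sum_card_fiberwise hT]
  have hfiber : ∀ S' ∈ T, #{S ∈ {S ∈ N.powersetCard k | Set.InjOn c (S : Finset α)} |
      S \ R = S'} = (#R - #S').choose (k - #S') := by
    intro S' hS'
    simp only [T, mem_filter, mem_powerset] at hS'
    rw [filter_filter]
    exact card_filter_injOn_sdiff_eq hRN hc hcR hS'.1 hS'.2.1 hS'.2.2
  rw [sum_congr rfl hfiber, ← sum_fiberwise_of_maps_to (g := card) (t := range (k + 1))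
    fun S' hS' => mem_range_succ_iff.mpr (mem_filter.mp hS').2.2]
  refine sum_congr rfl fun i hi => ?_
  have hTi :
      {S' ∈ T | #S' = i} = {S ∈ (N \ R).powersetCard i | Set.InjOn c (S : Finset α)} := by
    ext S'
    simp only [T, mem_filter, mem_powerset, mem_powersetCard]
    have := mem_range_succ_iff.mp hi
    constructor
    · rintro ⟨⟨hsub, hinj, -⟩, rfl⟩
      exact ⟨⟨hsub, rfl⟩, hinj⟩
    · rintro ⟨⟨hsub, rfl⟩, hinj⟩
      exact ⟨⟨hsub, hinj, this⟩, rfl⟩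
  rw [sum_congr rfl fun S' hS' => by rw [(mem_filter.mp hS').2], sum_const, hTi, smul_eq_mul,
    mul_comm]

end PartialTransversal

section NoncommutingSets

variable {G : Type*} [Group G] [Fintype G]

theorem bddAbove_setOf_card_noncommuting :
    BddAbove {n : ℕ | ∃ S : Finset G, S.card = n ∧ (∀ x ∈ S, x ≠ 1) ∧
      ∀ x ∈ S, ∀ y ∈ S, x ≠ y → x * y ≠ y * x} :=
  ⟨Fintype.card G, by rintro _ ⟨S, rfl, -⟩; exact card_le_univ S⟩

theorem card_le_nc {S : Finset G} (hS1 : ∀ x ∈ S, x ≠ 1)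
    (hS : ∀ x ∈ S, ∀ y ∈ S, x ≠ y → x * y ≠ y * x) : #S ≤ nc G :=
  le_csSup bddAbove_setOf_card_noncommuting ⟨S, rfl, hS1, hS⟩

theorem exists_card_eq_nc : ∃ R : Finset G, #R = nc G ∧ (∀ x ∈ R, x ≠ 1) ∧
    ∀ x ∈ R, ∀ y ∈ R, x ≠ y → x * y ≠ y * x := by
  refine Nat.sSup_mem ?_ bddAbove_setOf_card_noncommuting
  exact ⟨0, ∅, by simp⟩

theorem two_le_nc (hna : ∃ a b : G, a * b ≠ b * a) : 2 ≤ nc G := by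
  obtain ⟨a, b, hab⟩ := hna
  have hne : a ≠ b := by rintro rfl; exact hab rfl
  have hpair := card_le_nc (S := {a, b}) (by
    simp only [mem_insert, mem_singleton, forall_eq_or_imp, forall_eq]
    constructor <;> rintro rfl <;> simp at hab) (by
    simp only [mem_insert, mem_singleton, forall_eq_or_imp, forall_eq]
    exact ⟨⟨fun h => absurd rfl h, fun _ => hab⟩, fun _ h => hab h.symm, fun h => absurd rfl h⟩)
  rwa [card_pair hne] at hpair

theorem exists_mem_commute_of_card_eq_nc {R : Finset G} (hR : #R = nc G) (hR1 : ∀ x ∈ R, x ≠ 1)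
    (hRnc : ∀ x ∈ R, ∀ y ∈ R, x ≠ y → x * y ≠ y * x) {g : G} (hg : g ∉ center G) :
    ∃ r ∈ R, g * r = r * g := by
  by_contra! hcomm
  have hgR : g ∉ R := fun h => hcomm g h rfl
  have hins := card_le_nc (S := insert g R)
    (forall_mem_insert _ _ _ |>.mpr ⟨fun h => hg (h ▸ one_mem _), hR1⟩) (by
      simp only [mem_insert, forall_eq_or_imp]
      exact ⟨⟨fun h => absurd rfl h, fun y hy _ => hcomm y hy⟩,
        fun x hx => ⟨fun _ h => hcomm x hx h.symm, hRnc x hx⟩⟩)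
  rw [card_insert_of_notMem hgR, hR] at hins
  omega

end NoncommutingSets

section TCGroup

variable {G : Type*} [Group G]

theorem eq_of_mul_comm_of_mul_comm (htc : IsTCGroup G) {R : Finset G} (hRZ : ∀ r ∈ R, r ∉ center G)
    (hRnc : ∀ x ∈ R, ∀ y ∈ R, x ≠ y → x * y ≠ y * x) ⦃g r r' : G⦄ (hg : g ∉ center G)
    (hr : r ∈ R) (hr' : r' ∈ R) (h : g * r = r * g) (h' : g * r' = r' * g) : r = r' := by
  by_contra hne
  exact hRnc r hr r' hr' hne (htc r g r' (hRZ r hr) hg (hRZ r' hr') h.symm h')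

theorem exists_commute_representative [Fintype G] (hna : ∃ a b : G, a * b ≠ b * a)
    (htc : IsTCGroup G) :
    ∃ (R : Finset G) (c : G → G), #R = nc G ∧ (∀ r ∈ R, r ∉ center G) ∧
      (∀ g ∉ center G, c g ∈ R) ∧ (∀ r ∈ R, c r = r) ∧
      ∀ g ∉ center G, ∀ h ∉ center G, (g * h = h * g ↔ c g = c h) := by
  obtain ⟨R, hR, hR1, hRnc⟩ := exists_card_eq_nc (G := G)
  have hRZ : ∀ r ∈ R, r ∉ center G := by
    intro r hr hrZ
    obtain ⟨s, hs, hsr⟩ := exists_mem_ne (hR ▸ two_le_nc hna) r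
    exact hRnc r hr s hs hsr.symm (mem_center_iff.mp hrZ s).symm
  choose! c hcR hcomm using fun g (hg : g ∉ center G) =>
    exists_mem_commute_of_card_eq_nc hR hR1 hRnc hg
  have huniq := eq_of_mul_comm_of_mul_comm htc hRZ hRnc
  refine ⟨R, c, hR, hRZ, hcR, fun r hr => ?_, fun g hg h hh => ⟨fun hgh => ?_, fun hgh => ?_⟩⟩
  · exact (huniq (hRZ r hr) hr (hcR r (hRZ r hr)) rfl (hcomm r (hRZ r hr))).symm
  · have hcg : h * c g = c g * h :=
      (htc (c g) g h (hRZ _ (hcR g hg)) hg hh (hcomm g hg).symm hgh).symm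
    exact huniq hh (hcR g hg) (hcR h hh) hcg (hcomm h hh)
  · exact htc g (c g) h hg (hRZ _ (hcR g hg)) hh (hcomm g hg) (hgh ▸ (hcomm h hh).symm)

theorem exists_card_noncommuting_eq_sum [Fintype G] (hna : ∃ a b : G, a * b ≠ b * a)
    (htc : IsTCGroup G) :
    ∃ a : ℕ → ℕ, ∀ k, #(univ.filter fun S : Finset G => S.card = k ∧
      (∀ x ∈ S, x ∉ center G) ∧ ∀ x ∈ S, ∀ y ∈ S, x ≠ y → x * y ≠ y * x) =
        ∑ i ∈ range (k + 1), (nc G - i).choose (k - i) * a i := by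
  obtain ⟨R, c, hR, hRZ, hcR, hcfix, hcomm⟩ := exists_commute_representative hna htc
  set N : Finset G := univ.filter (· ∉ center G)
  have hRN : R ⊆ N := fun r hr => mem_filter.mpr ⟨mem_univ r, hRZ r hr⟩
  have hcN : ∀ g ∈ N, c g ∈ R := fun g hg => hcR g (mem_filter.mp hg).2
  refine ⟨fun i => #{S ∈ (N \ R).powersetCard i | Set.InjOn c (S : Finset G)}, fun k => ?_⟩
  rw [← hR, ← card_filter_injOn_eq_sum hRN hcN hcfix k]
  congr 1
  ext S
  simp only [mem_filter, mem_univ, true_and, mem_powersetCard, N, subset_iff]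
  constructor
  · rintro ⟨hk, hZ, hnc⟩
    refine ⟨⟨hZ, hk⟩, fun x hx y hy hxy => ?_⟩
    by_contra hne
    exact hnc x hx y hy hne ((hcomm x (hZ x hx) y (hZ y hy)).mpr hxy)
  · rintro ⟨⟨hZ, hk⟩, hinj⟩
    exact ⟨hk, hZ, fun x hx y hy hne hxy =>
      hne (hinj hx hy ((hcomm x (hZ x hx) y (hZ y hy)).mp hxy))⟩

end TCGroup

/-- Shellability inequalities for a finite nonabelian TC-group `G`: with
`n = nc(G)` and `nc_k` the number of non-commuting sets of noncentral elements
of size `k`, for all `1 ≤ j ≤ n`,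
`(-1)^j C(n,j) + ∑_{k=1}^{j} (-1)^{j-k} C(n-k, j-k) nc_k ≥ 0`. -/
theorem stmt_18 {G : Type*} [Group G] [Fintype G]
    (hna : ∃ a b : G, a * b ≠ b * a)
    (htc : ∀ g h k : G, g ∉ Subgroup.center G → h ∉ Subgroup.center G →
      k ∉ Subgroup.center G → g * h = h * g → h * k = k * h → g * k = k * g) :
    ∀ j : ℕ, 1 ≤ j → j ≤ nc G →
      0 ≤ (-1 : ℤ) ^ j * ((nc G).choose j : ℤ) +
        ∑ k ∈ Finset.Icc 1 j, (-1 : ℤ) ^ (j - k) * ((nc G - k).choose (j - k) : ℤ) *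
          ((Finset.univ.filter (fun S : Finset G => S.card = k ∧
            (∀ x ∈ S, x ∉ Subgroup.center G) ∧
            ∀ x ∈ S, ∀ y ∈ S, x ≠ y → x * y ≠ y * x)).card : ℤ) := by
  intro j _ hjn
  obtain ⟨a, ha⟩ := exists_card_noncommuting_eq_sum hna htc
  refine neg_one_pow_mul_choose_add_sum_Icc_nonneg hjn ha (card_eq_one.mpr ⟨∅, ?_⟩)
  ext S
  simp +contextual
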